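/- (Zassenhaus Lemma in an ideal determined category) Let C be an ideal determined category. Let K → U and L → V be kernels and U → A, V → A monomorphisms. Then (K ∨_U (U∩V)) / (K ∨_U (L∩U)) ≅ (U∩V) / ((K∩V) ∨_{U∩V} (L∩U)) ≅ (L ∨_V (U∩V)) / (L ∨_V (K∩V)). -/

import Mathlib

open CategoryTheory CategoryTheory.Limits

universe v u

namespace StarReg

variable {C : Type u} [Category.{v} C]

/-- An ideal of morphisms in the sense of Ehresmann. -/
def IsIdealClass (N : MorphismProperty C) : Prop :=
  (∀ ⦃X Y Z : C⦄ (f : X ⟶ Y) (g : Y ⟶ Z), N f → N (f ≫ g)) ∧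
  (∀ ⦃X Y Z : C⦄ (f : X ⟶ Y) (g : Y ⟶ Z), N g → N (f ≫ g))

/-- `k` is an `N`-kernel of `f`. -/
def IsNKernel (N : MorphismProperty C) {K X Y : C} (k : K ⟶ X) (f : X ⟶ Y) : Prop :=
  N (k ≫ f) ∧ ∀ ⦃L : C⦄ (g : L ⟶ X), N (g ≫ f) → ∃! μ : L ⟶ K, μ ≫ k = g

def HasNKernels (N : MorphismProperty C) : Prop :=
  ∀ ⦃X Y : C⦄ (f : X ⟶ Y), ∃ (K : C) (k : K ⟶ X), IsNKernel N k f

/-- Every morphism factors as a regular epimorphism followed by a monomorphism. -/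
def RegEpiMonoFactorisations (C : Type u) [Category.{v} C] : Prop :=
  ∀ ⦃X Y : C⦄ (f : X ⟶ Y), ∃ (Z : C) (e : X ⟶ Z) (m : Z ⟶ Y),
    Nonempty (RegularEpi e) ∧ Mono m ∧ e ≫ m = f

/-- Regular epimorphisms are stable under pullback. -/
def RegEpisPullbackStable (C : Type u) [Category.{v} C] : Prop :=
  ∀ ⦃P X Y Z : C⦄ (fst : P ⟶ X) (snd : P ⟶ Y) (f : X ⟶ Z) (g : Y ⟶ Z),
    IsPullback fst snd f g → Nonempty (RegularEpi g) → Nonempty (RegularEpi fst)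

/-- A star: a pair of parallel morphisms whose first component lies in `N`. -/
structure Star (N : MorphismProperty C) (X : C) where
  T : C
  a : T ⟶ X
  b : T ⟶ X
  ha : N a

/-- A monic star: the pair is jointly monomorphic. -/
def Star.Monic {N : MorphismProperty C} {X : C} (s : Star N X) : Prop :=
  ∀ ⦃W : C⦄ (u v : W ⟶ s.T), u ≫ s.a = v ≫ s.a → u ≫ s.b = v ≫ s.b → u = v

/-- `s` is the kernel star of `f`. -/
def IsKernelStar {N : MorphismProperty C} {X Y : C} (f : X ⟶ Y) (s : Star N X) : Prop :=
  s.a ≫ f = s.b ≫ f ∧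
  ∀ t : Star N X, t.a ≫ f = t.b ≫ f →
    ∃! u : t.T ⟶ s.T, u ≫ s.a = t.a ∧ u ≫ s.b = t.b

/-- `t` is the (regular epi, monic star) image of the star `s` along `f`. -/
def IsImageFact {N : MorphismProperty C} {X Y : C} (f : X ⟶ Y) (s : Star N X)
    (t : Star N Y) : Prop :=
  t.Monic ∧ ∃ e : s.T ⟶ t.T,
    Nonempty (RegularEpi e) ∧ e ≫ t.a = s.a ≫ f ∧ e ≫ t.b = s.b ≫ f

/-- `f` is a coequaliser of the star `s`. -/
def IsStarCoequalizer {N : MorphismProperty C} {X Q : C} (s : Star N X) (f : X ⟶ Q) : Prop :=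
  s.a ≫ f = s.b ≫ f ∧
  ∀ ⦃W : C⦄ (h : X ⟶ W), s.a ≫ h = s.b ≫ h → ∃! u : Q ⟶ W, f ≫ u = h

/-- `s` is the star `Δ*_X` of the discrete relation on `X`. -/
def IsDeltaStar {N : MorphismProperty C} {X : C} (s : Star N X) : Prop :=
  s.a = s.b ∧ IsNKernel N s.a (𝟙 X)

def RegEpisAreStarCoequalizers (N : MorphismProperty C) : Prop :=
  ∀ ⦃X Y : C⦄ (f : X ⟶ Y), Nonempty (RegularEpi f) →
    ∃ s : Star N X, IsStarCoequalizer s f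

/-- A star-regular category: regular multi-pointed with `N`-kernels, every regular
epimorphism a coequaliser of a star. -/
def StarRegular (N : MorphismProperty C) : Prop :=
  IsIdealClass N ∧ HasNKernels N ∧ RegEpiMonoFactorisations C ∧
    RegEpisPullbackStable C ∧ RegEpisAreStarCoequalizers N

def HasKernelStarCoequalizers (N : MorphismProperty C) : Prop :=
  ∀ ⦃X Y : C⦄ (f : X ⟶ Y) (s : Star N X), IsKernelStar f s →
    ∃ (Q : C) (q : X ⟶ Q), IsStarCoequalizer s q

/-- `f` is saturating: the image of `Δ*` along `f` is `Δ*`. -/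
def Saturating (N : MorphismProperty C) {X Y : C} (f : X ⟶ Y) : Prop :=
  ∀ (s : Star N X) (t : Star N Y), IsDeltaStar s → IsImageFact f s t → IsDeltaStar t

/-- The diamond `e ≫ g = f ≫ h` is right saturated: `f(E*) = H*`. -/
def RightSaturated (N : MorphismProperty C) {X Y Z W : C}
    (e : X ⟶ Z) (f : X ⟶ Y) (_g : Z ⟶ W) (h : Y ⟶ W) : Prop :=
  ∀ (s : Star N X) (t : Star N Y), IsKernelStar e s → IsImageFact f s t → IsKernelStar h t

/-- The diamond `e ≫ g = f ≫ h` is left saturated: `e(F*) = G*`. -/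
def LeftSaturated (N : MorphismProperty C) {X Y Z W : C}
    (e : X ⟶ Z) (f : X ⟶ Y) (g : Z ⟶ W) (_h : Y ⟶ W) : Prop :=
  ∀ (s : Star N X) (t : Star N Z), IsKernelStar f s → IsImageFact e s t → IsKernelStar g t

/-- `s` is a kernel star (of some morphism). -/
def IsAKernelStar {N : MorphismProperty C} {X : C} (s : Star N X) : Prop :=
  ∃ (W : C) (w : X ⟶ W), IsKernelStar w s

/-- Inclusion of stars on the same object. -/
def StarLE {N : MorphismProperty C} {X : C} (s t : Star N X) : Prop :=
  ∃ m : s.T ⟶ t.T, m ≫ t.a = s.a ∧ m ≫ t.b = s.b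

/-- Property (*): images along coequalisers of smaller kernel stars of kernel stars are
kernel stars. -/
def PropertyStar (N : MorphismProperty C) : Prop :=
  ∀ ⦃A Q : C⦄ (F G : Star N A) (f : A ⟶ Q),
    IsKernelStar f F → IsStarCoequalizer F f → IsAKernelStar G → StarLE F G →
    ∀ t : Star N Q, IsImageFact f G t → IsAKernelStar t

/-- `σ` (with comparison `j`) is the star-pullback of `τ` along `g`. -/
def IsStarPullback {N : MorphismProperty C} {X Y : C} (g : X ⟶ Y) (τ : Star N Y)
    (σ : Star N X) (j : σ.T ⟶ τ.T) : Prop :=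
  σ.a ≫ g = j ≫ τ.a ∧ σ.b ≫ g = j ≫ τ.b ∧
  ∀ (ρ : Star N X) (w : ρ.T ⟶ τ.T), ρ.a ≫ g = w ≫ τ.a → ρ.b ≫ g = w ≫ τ.b →
    ∃! h : ρ.T ⟶ σ.T, h ≫ σ.a = ρ.a ∧ h ≫ σ.b = ρ.b ∧ h ≫ j = w

def HasRegEpiPushouts (C : Type u) [Category.{v} C] : Prop :=
  ∀ ⦃X Y Z : C⦄ (f : X ⟶ Y) (g : X ⟶ Z), Nonempty (RegularEpi f) → Nonempty (RegularEpi g) →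
    ∃ (W : C) (p : Y ⟶ W) (q : Z ⟶ W), IsPushout f g p q

end StarReg

namespace PtReg

variable {C : Type u} [Category.{v} C] [HasZeroMorphisms C]

/-- `k` is a kernel of `f` in the pointed sense. -/
def IsPKernel {K X Y : C} (k : K ⟶ X) (f : X ⟶ Y) : Prop :=
  k ≫ f = 0 ∧ ∀ ⦃L : C⦄ (g : L ⟶ X), g ≫ f = 0 → ∃! u : L ⟶ K, u ≫ k = g

/-- `q` is a cokernel of `k` in the pointed sense. -/
def IsPCokernel {K X Q : C} (k : K ⟶ X) (q : X ⟶ Q) : Prop :=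
  k ≫ q = 0 ∧ ∀ ⦃W : C⦄ (h : X ⟶ W), k ≫ h = 0 → ∃! u : Q ⟶ W, q ≫ u = h

/-- A normal monomorphism: a kernel of some morphism. -/
def IsNormalMonoP {K X : C} (k : K ⟶ X) : Prop :=
  ∃ (Y : C) (f : X ⟶ Y), IsPKernel k f

/-- Every regular epimorphism is a normal epimorphism (a cokernel). -/
def RegEpisAreNormal (C : Type u) [Category.{v} C] [HasZeroMorphisms C] : Prop :=
  ∀ ⦃X Y : C⦄ (f : X ⟶ Y), Nonempty (RegularEpi f) →
    ∃ (K : C) (k : K ⟶ X), IsPCokernel k f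

/-- A normal category: pointed regular, every regular epi normal. -/
def NormalCat (C : Type u) [Category.{v} C] [HasZeroMorphisms C] : Prop :=
  StarReg.RegEpiMonoFactorisations C ∧ StarReg.RegEpisPullbackStable C ∧ RegEpisAreNormal C

/-- An internal equivalence relation. -/
def IsEquivRelPair {R X : C} (r1 r2 : R ⟶ X) : Prop :=
  (∀ ⦃W : C⦄ (u v : W ⟶ R), u ≫ r1 = v ≫ r1 → u ≫ r2 = v ≫ r2 → u = v) ∧
  (∃ d : X ⟶ R, d ≫ r1 = 𝟙 X ∧ d ≫ r2 = 𝟙 X) ∧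
  (∃ s : R ⟶ R, s ≫ r1 = r2 ∧ s ≫ r2 = r1) ∧
  (∀ ⦃P : C⦄ (p1 p2 : P ⟶ R), IsPullback p1 p2 r2 r1 →
    ∃ t : P ⟶ R, t ≫ r1 = p1 ≫ r1 ∧ t ≫ r2 = p2 ≫ r2)

/-- Barr-exactness: every equivalence relation is effective (a kernel pair). -/
def EquivRelsEffective (C : Type u) [Category.{v} C] : Prop :=
  ∀ ⦃R X : C⦄ (r1 r2 : R ⟶ X), IsEquivRelPair r1 r2 →
    ∃ (Y : C) (q : X ⟶ Y), IsPullback r1 r2 q q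

/-- Protomodularity in the pointed context: the split short five lemma. -/
def SplitShortFive (C : Type u) [Category.{v} C] [HasZeroMorphisms C] : Prop :=
  ∀ ⦃K A B K' A' B' : C⦄ (k : K ⟶ A) (p : A ⟶ B) (s : B ⟶ A)
    (k' : K' ⟶ A') (p' : A' ⟶ B') (s' : B' ⟶ A')
    (κ : K ⟶ K') (α : A ⟶ A') (β : B ⟶ B'),
    IsPKernel k p → IsPKernel k' p' → s ≫ p = 𝟙 B → s' ≫ p' = 𝟙 B' →
    k ≫ α = κ ≫ k' → p ≫ β = α ≫ p' → s ≫ α = β ≫ s' →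
    IsIso κ → IsIso β → IsIso α

/-- A semi-abelian category: pointed, regular, Barr-exact, protomodular
(with a zero object, finite limits and binary coproducts as instance hypotheses). -/
def SemiAbelianCat (C : Type u) [Category.{v} C] [HasZeroMorphisms C] : Prop :=
  StarReg.RegEpiMonoFactorisations C ∧ StarReg.RegEpisPullbackStable C ∧
    EquivRelsEffective C ∧ SplitShortFive C

end PtReg

/-! Both outer quotients are cokernels of `M = (K∩V) ∨ (L∩U) ⟶ U∩V`. On the `U`-side put
`J = K ∨_U (U∩V)` and `J' = K ∨_U (L∩U)`. The composite `U∩V ⟶ J ⟶ J/J'` is epi because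
`J/K ≅ (U∩V)/(K∩V)`. It kills `M`: ideal determinedness makes the image of `L∩U` in
`(U∩V)/(K∩V)` normal, so `M` maps into it and hence into `J'`. Conversely a map killing `K∩V`
and `L∩U` factors through `(U∩V)/(K∩V) ≅ J/K`, kills `J'/K` there, so factors through `J/J'`.
The `V`-side is symmetric, and cokernels are unique up to isomorphism. -/

namespace PtReg

open StarReg

def RegImagesOfNormalMonosAreNormal (C : Type u) [Category.{v} C] [HasZeroMorphisms C] : Prop :=
  ∀ ⦃K X Y Z : C⦄ (k : K ⟶ X) (f : X ⟶ Y) (e : K ⟶ Z) (n : Z ⟶ Y),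
    IsNormalMonoP k → Nonempty (RegularEpi f) → Nonempty (RegularEpi e) → Mono n →
    e ≫ n = k ≫ f → IsNormalMonoP n

variable {C : Type u} [Category.{v} C]

/-- The asymmetric join `K ∨_U S = f⁻¹(f(S))` of the kernel `K` of `f : U ⟶ Q` with
`s : S ⟶ U`: the pullback `P` along `f` of the (regular epi, mono) image `e ≫ m` of `s ≫ f`. -/
structure AsymmetricJoin {S U Q : C} (f : U ⟶ Q) (s : S ⟶ U) where
  I : C
  e : S ⟶ I
  m : I ⟶ Q
  regularEpi_e : Nonempty (RegularEpi e)
  mono_m : Mono m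
  fac : e ≫ m = s ≫ f
  P : C
  p : P ⟶ I
  ι : P ⟶ U
  isPullback : IsPullback p ι m f

namespace AsymmetricJoin

variable {S U Q : C} {f : U ⟶ Q} {s : S ⟶ U} (J : AsymmetricJoin f s)

noncomputable def incl : S ⟶ J.P := J.isPullback.lift J.e s J.fac

theorem incl_p : J.incl ≫ J.p = J.e := J.isPullback.lift_fst _ _ _

theorem incl_ι : J.incl ≫ J.ι = s := J.isPullback.lift_snd _ _ _

theorem mono_ι : Mono J.ι := J.isPullback.mono_snd_of_mono J.mono_m

theorem exists_imageMap {B : C} {b : B ⟶ S} (J' : AsymmetricJoin f (b ≫ s))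
    {r : J'.P ⟶ J.P} (hr : r ≫ J.ι = J'.ι) :
    ∃ t : J'.I ⟶ J.I, J'.e ≫ t = b ≫ J.e ∧ r ≫ J.p = J'.p ≫ t := by
  have := J.mono_m
  have : IsRegularEpi J'.e := ⟨J'.regularEpi_e⟩
  have sq : CommSq (b ≫ J.e) J'.e J.m J'.m :=
    ⟨by rw [J'.fac, Category.assoc, J.fac, Category.assoc]⟩
  refine ⟨sq.lift, sq.fac_left, ?_⟩
  rw [← cancel_mono J.m, Category.assoc, J.isPullback.w, reassoc_of% hr, Category.assoc,
    sq.fac_right, J'.isPullback.w]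

end AsymmetricJoin

variable [HasZeroMorphisms C]

section KernelsAndCokernels

variable {K X Y Q : C} {k : K ⟶ X} {f : X ⟶ Y} {q : X ⟶ Q}

theorem IsPCokernel.epi (h : IsPCokernel k q) : Epi q :=
  ⟨fun a _ hab => (h.2 (q ≫ a) (by rw [reassoc_of% h.1, zero_comp])).unique rfl hab.symm⟩

theorem IsPCokernel.nonempty_regularEpi (h : IsPCokernel k q) : Nonempty (RegularEpi q) :=
  ⟨⟨K, k, 0, by rw [h.1, zero_comp], Cofork.IsColimit.ofExistsUnique fun s => by
    simpa using h.2 s.π (by simp)⟩⟩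

theorem IsPCokernel.of_epi [Epi q] (hk : k ≫ q = 0)
    (hdesc : ∀ ⦃T : C⦄ (g : X ⟶ T), k ≫ g = 0 → ∃ u : Q ⟶ T, q ≫ u = g) :
    IsPCokernel k q :=
  ⟨hk, fun _ g hg => (hdesc g hg).elim fun u hu =>
    ⟨u, hu, fun _ hy => (cancel_epi q).1 (hy.trans hu.symm)⟩⟩

theorem IsPCokernel.nonempty_iso {Q' : C} {q' : X ⟶ Q'} (h : IsPCokernel k q)
    (h' : IsPCokernel k q') : Nonempty (Q ≅ Q') := by
  obtain ⟨φ, hφ : q ≫ φ = q', -⟩ := h.2 q' h'.1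
  obtain ⟨ψ, hψ : q' ≫ ψ = q, -⟩ := h'.2 q h.1
  have := h.epi
  have := h'.epi
  exact ⟨⟨φ, ψ, by rw [← cancel_epi q, reassoc_of% hφ, hψ, Category.comp_id],
    by rw [← cancel_epi q', reassoc_of% hψ, hφ, Category.comp_id]⟩⟩

theorem IsPCokernel.pushout {A Z P : C} {w : A ⟶ X} {g : X ⟶ Z} {p : Y ⟶ P} {p' : Z ⟶ P}
    (hg : IsPCokernel w g) (hpo : IsPushout f g p p') : IsPCokernel (w ≫ f) p := by
  have := hg.epi
  refine ⟨by rw [Category.assoc, hpo.w, reassoc_of% hg.1, zero_comp], fun T h hh => ?_⟩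
  obtain ⟨t, ht : g ≫ t = f ≫ h, -⟩ := hg.2 (f ≫ h) (by rwa [← Category.assoc])
  refine ⟨hpo.desc h t ht.symm, hpo.inl_desc _ _ _, fun y (hy : p ≫ y = h) =>
    hpo.hom_ext (by rw [hpo.inl_desc, hy]) ?_⟩
  rw [hpo.inr_desc, ← cancel_epi g, ht, ← hy, ← hpo.w_assoc]

theorem IsPKernel.mono (h : IsPKernel k f) : Mono k :=
  ⟨fun a _ hab => (h.2 (a ≫ k) (by rw [Category.assoc, h.1, comp_zero])).unique rfl hab.symm⟩

theorem IsNormalMonoP.isPKernel (hk : IsNormalMonoP k) (hq : IsPCokernel k q) :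
    IsPKernel k q := by
  obtain ⟨Y, f, hf⟩ := hk
  obtain ⟨t, ht : q ≫ t = f, -⟩ := hq.2 f hf.1
  exact ⟨hq.1, fun _ g hg => hf.2 g (by rw [← ht, reassoc_of% hg, zero_comp])⟩

theorem IsPKernel.isPCokernel (hC : RegEpisAreNormal C) (hk : IsPKernel k q)
    (hq : Nonempty (RegularEpi q)) : IsPCokernel k q := by
  obtain ⟨K₀, k₀, hk₀⟩ := hC q hq
  obtain ⟨y, hy : y ≫ k = k₀, -⟩ := hk.2 k₀ hk₀.1
  exact ⟨hk.1, fun _ g hg => hk₀.2 g (by rw [← hy, Category.assoc, hg, comp_zero])⟩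

theorem IsPKernel.of_comp_mono {Z : C} {e : X ⟶ Y} {n : Y ⟶ Z} [Mono n]
    (h : IsPKernel k (e ≫ n)) : IsPKernel k e :=
  ⟨by rw [← cancel_mono n, Category.assoc, h.1, zero_comp],
    fun _ g hg => h.2 g (by rw [reassoc_of% hg, zero_comp])⟩

theorem IsPKernel.pullback {Z P : C} {g : Z ⟶ X} {p₁ : P ⟶ K} {p₂ : P ⟶ Z}
    (hk : IsPKernel k f) (hP : IsPullback p₁ p₂ k g) : IsPKernel p₂ (g ≫ f) := by
  have := hk.mono
  refine ⟨by rw [← reassoc_of% hP.w, hk.1, comp_zero], fun _ x hx => ?_⟩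
  obtain ⟨y, hy : y ≫ k = x ≫ g, -⟩ := hk.2 (x ≫ g) (by rw [Category.assoc, hx])
  refine ⟨hP.lift y x hy, hP.lift_snd _ _ _, fun z (hz : z ≫ p₂ = x) =>
    hP.hom_ext ?_ (by rw [hP.lift_snd, hz])⟩
  rw [hP.lift_fst, ← cancel_mono k, Category.assoc, hP.w, ← Category.assoc, hz, hy]

theorem IsPKernel.of_isPullback {P I : C} {p : P ⟶ I} {ι : P ⟶ X} {n : I ⟶ Y} {κ : K ⟶ P}
    (hk : IsPKernel k f) (hP : IsPullback p ι n f) (hκp : κ ≫ p = 0) (hκι : κ ≫ ι = k) :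
    IsPKernel κ p := by
  have : Mono (κ ≫ ι) := hκι ▸ hk.mono
  have := mono_of_mono κ ι
  refine ⟨hκp, fun _ x hx => ?_⟩
  obtain ⟨y, hy : y ≫ k = x ≫ ι, -⟩ :=
    hk.2 (x ≫ ι) (by rw [Category.assoc, ← hP.w, reassoc_of% hx, zero_comp])
  have hyx : y ≫ κ = x :=
    hP.hom_ext (by rw [Category.assoc, hκp, comp_zero, hx]) (by rw [Category.assoc, hκι, hy])
  exact ⟨y, hyx, fun z (hz : z ≫ κ = x) => by rw [← cancel_mono κ, hz, hyx]⟩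

end KernelsAndCokernels

theorem epi_comp_of_isPCokernel {K P I Q W : C} {κ : K ⟶ P} {p : P ⟶ I} {q : P ⟶ Q}
    {w : W ⟶ P} (hp : IsPCokernel κ p) (hκq : κ ≫ q = 0) [Epi q] [Epi (w ≫ p)] :
    Epi (w ≫ q) := by
  refine ⟨fun {T} a b hab => ?_⟩
  obtain ⟨a₀, ha₀ : p ≫ a₀ = q ≫ a, -⟩ := hp.2 (q ≫ a) (by rw [reassoc_of% hκq, zero_comp])
  obtain ⟨b₀, hb₀ : p ≫ b₀ = q ≫ b, -⟩ := hp.2 (q ≫ b) (by rw [reassoc_of% hκq, zero_comp])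
  have hab₀ : a₀ = b₀ := by
    rw [← cancel_epi (w ≫ p), Category.assoc, Category.assoc, ha₀, hb₀]
    simpa only [Category.assoc] using hab
  rw [← cancel_epi q, ← ha₀, ← hb₀, hab₀]

theorem isPKernel_of_regularImage (hid : RegImagesOfNormalMonosAreNormal C)
    {B X Y Z T : C} {b : B ⟶ X} {f : X ⟶ Y} {e : B ⟶ Z} {n : Z ⟶ Y} {p : Y ⟶ T}
    (hb : IsNormalMonoP b) (hf : Nonempty (RegularEpi f)) (he : Nonempty (RegularEpi e))
    [Mono n] (hfac : e ≫ n = b ≫ f) (hp : IsPCokernel (b ≫ f) p) : IsPKernel n p := by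
  have := he.some.epi
  refine (hid b f e n hb hf he inferInstance hfac).isPKernel ⟨?_, fun _ g hg => hp.2 g ?_⟩
  · rw [← cancel_epi e, ← Category.assoc, hfac, hp.1, comp_zero]
  · rw [← hfac, Category.assoc, hg, comp_zero]

namespace AsymmetricJoin

variable {S U Q : C} {f : U ⟶ Q} {s : S ⟶ U} (J : AsymmetricJoin f s)

noncomputable def ofKernel {K : C} (k : K ⟶ U) (hk : k ≫ f = 0) : K ⟶ J.P :=
  J.isPullback.lift 0 k (by rw [zero_comp, hk])

theorem ofKernel_p {K : C} (k : K ⟶ U) (hk : k ≫ f = 0) : J.ofKernel k hk ≫ J.p = 0 :=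
  J.isPullback.lift_fst _ _ _

theorem ofKernel_ι {K : C} (k : K ⟶ U) (hk : k ≫ f = 0) : J.ofKernel k hk ≫ J.ι = k :=
  J.isPullback.lift_snd _ _ _

theorem ofKernel_comp {K S' : C} {k : K ⟶ U} (hk : k ≫ f = 0) {s' : S' ⟶ U}
    (J' : AsymmetricJoin f s') {r : J'.P ⟶ J.P} (hr : r ≫ J.ι = J'.ι) :
    J'.ofKernel k hk ≫ r = J.ofKernel k hk := by
  have := J.mono_ι
  rw [← cancel_mono J.ι, Category.assoc, hr, ofKernel_ι, ofKernel_ι]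

theorem isPCokernel_e (hC : RegEpisAreNormal C) {A : C} {a : A ⟶ S}
    (ha : IsPKernel a (s ≫ f)) : IsPCokernel a J.e :=
  have := J.mono_m
  (J.fac ▸ ha : IsPKernel a (J.e ≫ J.m)).of_comp_mono.isPCokernel hC J.regularEpi_e

theorem isPCokernel_ofKernel (hC : RegEpisAreNormal C) (hstab : RegEpisPullbackStable C)
    {K : C} {k : K ⟶ U} (hk : IsPKernel k f) (hf : Nonempty (RegularEpi f)) :
    IsPCokernel (J.ofKernel k hk.1) J.p :=
  (hk.of_isPullback J.isPullback (J.ofKernel_p k hk.1) (J.ofKernel_ι k hk.1)).isPCokernel hC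
    (hstab _ _ _ _ J.isPullback hf)

end AsymmetricJoin

section ZassenhausSide

variable {K U Q W A B W₁ T M : C} {k : K ⟶ U} {f : U ⟶ Q} {i : W ⟶ U} {a : A ⟶ W}
  {b : B ⟶ W} {f₁ : W ⟶ W₁} {p₁ : W₁ ⟶ T} {m : M ⟶ W}

/-- Ideal determinedness makes the image of `B` in `W/A` normal, hence the kernel of `p₁`; so
`M = A ∨ B` maps into it, and therefore into `K ∨_U B`. -/
theorem exists_lift_asymmetricJoin_of_isPKernel_sup (hid : RegImagesOfNormalMonosAreNormal C)
    (hfac : RegEpiMonoFactorisations C) (ha : a ≫ i ≫ f = 0) (hb : IsNormalMonoP b)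
    (hf₁ : IsPCokernel a f₁) (hp₁ : IsPCokernel (b ≫ f₁) p₁) (hm : IsPKernel m (f₁ ≫ p₁))
    (J' : AsymmetricJoin f (b ≫ i)) : ∃ m' : M ⟶ J'.P, m' ≫ J'.ι = m ≫ i := by
  obtain ⟨Z, e', n', he', hn', hfacZ⟩ := hfac (b ≫ f₁)
  have hn'p₁ := isPKernel_of_regularImage hid hb hf₁.nonempty_regularEpi he' hfacZ hp₁
  obtain ⟨z, hz : z ≫ n' = m ≫ f₁, -⟩ := hn'p₁.2 (m ≫ f₁) (by rw [Category.assoc]; exact hm.1)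
  obtain ⟨t, ht : f₁ ≫ t = i ≫ f, -⟩ := hf₁.2 (i ≫ f) ha
  have := J'.mono_m
  have : IsRegularEpi e' := ⟨he'⟩
  have sq : CommSq J'.e e' J'.m (n' ≫ t) :=
    ⟨by rw [J'.fac, reassoc_of% hfacZ, ht, Category.assoc]⟩
  refine ⟨J'.isPullback.lift (z ≫ sq.lift) (m ≫ i) ?_, J'.isPullback.lift_snd _ _ _⟩
  rw [Category.assoc, sq.fac_right, reassoc_of% hz, ht, Category.assoc]

theorem exists_desc_of_comp_eq_zero (hC : RegEpisAreNormal C) (ha : IsPKernel a (i ≫ f))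
    (J : AsymmetricJoin f i) (J' : AsymmetricJoin f (b ≫ i)) {r : J'.P ⟶ J.P}
    (hr : r ≫ J.ι = J'.ι) {Q₁ : C} {q : J.P ⟶ Q₁} (hq : IsPCokernel r q) {X : C} {h : W ⟶ X}
    (hah : a ≫ h = 0) (hbh : b ≫ h = 0) : ∃ u : Q₁ ⟶ X, (J.incl ≫ q) ≫ u = h := by
  obtain ⟨h', hh' : J.e ≫ h' = h, -⟩ := (J.isPCokernel_e hC ha).2 h hah
  obtain ⟨t, ht, hrt⟩ := J.exists_imageMap J' hr
  have := J'.regularEpi_e.some.epi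
  have hth : t ≫ h' = 0 := by
    rw [← cancel_epi J'.e, ← Category.assoc, ht, Category.assoc, hh', hbh, comp_zero]
  obtain ⟨u, hu : q ≫ u = J.p ≫ h', -⟩ :=
    hq.2 (J.p ≫ h') (by rw [← Category.assoc, hrt, Category.assoc, hth, comp_zero])
  exact ⟨u, by rw [Category.assoc, hu, ← Category.assoc, J.incl_p, hh']⟩

theorem isPCokernel_incl_comp (hnc : NormalCat C) (hid : RegImagesOfNormalMonosAreNormal C)
    (hk : IsPKernel k f) (hf : IsPCokernel k f) (ha : IsPKernel a (i ≫ f))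
    (hb : IsNormalMonoP b) (hf₁ : IsPCokernel a f₁) (hp₁ : IsPCokernel (b ≫ f₁) p₁)
    (hm : IsPKernel m (f₁ ≫ p₁)) (J : AsymmetricJoin f i) (J' : AsymmetricJoin f (b ≫ i))
    {r : J'.P ⟶ J.P} (hr : r ≫ J.ι = J'.ι) {Q₁ : C} {q : J.P ⟶ Q₁} (hq : IsPCokernel r q) :
    IsPCokernel m (J.incl ≫ q) := by
  obtain ⟨hfac, hstab, hC⟩ := hnc
  obtain ⟨m', hm'⟩ :=
    exists_lift_asymmetricJoin_of_isPKernel_sup hid hfac ha.1 hb hf₁ hp₁ hm J'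
  have := J.mono_ι
  have := hq.epi
  have : Epi (J.incl ≫ J.p) := J.incl_p ▸ J.regularEpi_e.some.epi
  have := epi_comp_of_isPCokernel (w := J.incl)
    (J.isPCokernel_ofKernel hC hstab hk hf.nonempty_regularEpi)
    (by rw [← J.ofKernel_comp hk.1 J' hr, Category.assoc, hq.1, comp_zero])
  have hmr : m ≫ J.incl = m' ≫ r := by
    rw [← cancel_mono J.ι, Category.assoc, J.incl_ι, Category.assoc, hr, hm']
  refine IsPCokernel.of_epi (by rw [← Category.assoc, hmr, Category.assoc, hq.1, comp_zero])
    fun _ h hh => exists_desc_of_comp_eq_zero hC ha J J' hr hq ?_ ?_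
  · obtain ⟨a', ha' : a' ≫ m = a, -⟩ := hm.2 a (by rw [reassoc_of% hf₁.1, zero_comp])
    rw [← ha', Category.assoc, hh, comp_zero]
  · obtain ⟨b', hb' : b' ≫ m = b, -⟩ := hm.2 b (by rw [← Category.assoc]; exact hp₁.1)
    rw [← hb', Category.assoc, hh, comp_zero]

end ZassenhausSide

end PtReg

open CategoryTheory CategoryTheory.Limits StarReg PtReg in
theorem statement14_general {C : Type u} [Category.{v} C] [HasZeroMorphisms C] (hnc : NormalCat C)
    -- ideal determined: regular images of normal monos are normal monos
    (hid : ∀ ⦃K X Y Z : C⦄ (k : K ⟶ X) (f : X ⟶ Y) (e : K ⟶ Z) (n : Z ⟶ Y),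
      IsNormalMonoP k → Nonempty (RegularEpi f) → Nonempty (RegularEpi e) → Mono n →
      e ≫ n = k ≫ f → IsNormalMonoP n)
    -- kernels `k : K ⟶ U`, `l : L ⟶ V` and monos `u : U ⟶ A`, `v : V ⟶ A`
    {K U L V A : C} (k : K ⟶ U) (hk : IsNormalMonoP k) (l : L ⟶ V) (hl : IsNormalMonoP l)
    (u : U ⟶ A) (v : V ⟶ A)
    -- the intersection `W = U ∩ V`
    {W : C} (iU : W ⟶ U) (iV : W ⟶ V)
    -- `K ∩ V` as a subobject of `W`, and `L ∩ U` as a subobject of `W`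
    {KV : C} (kvK : KV ⟶ K) (kvW : KV ⟶ W) (hKV : IsPullback kvK kvW k iU)
    {LU : C} (luL : LU ⟶ L) (luW : LU ⟶ W) (hLU : IsPullback luL luW l iV)
    -- cokernels of `K∩V → W` and `L∩U → W`, their pushout and its diagonal
    {W₁ : C} (f₁ : W ⟶ W₁) (hf₁ : IsPCokernel kvW f₁)
    {W₂ : C} (g₁ : W ⟶ W₂) (hg₁ : IsPCokernel luW g₁)
    {Tq : C} (p₁ : W₁ ⟶ Tq) (p₂ : W₂ ⟶ Tq) (hpush : IsPushout f₁ g₁ p₁ p₂)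
    -- the supremum `(K∩V) ∨ (L∩U)`: kernel of the diagonal
    {MM : C} (mM : MM ⟶ W) (hmM : IsPKernel mM (f₁ ≫ p₁))
    -- the middle quotient `(U∩V)/((K∩V) ∨ (L∩U))`
    {QM : C} (qMid : W ⟶ QM) (hqMid : IsPCokernel mM qMid)
    -- U-side: cokernel `fU` of `k`, join `P₁ = K ∨_U (U∩V)`
    {QU : C} (fU : U ⟶ QU) (hfU : IsPCokernel k fU)
    {WU : C} (e₁ : W ⟶ WU) (n₁ : WU ⟶ QU) (he₁ : Nonempty (RegularEpi e₁)) (hn₁ : Mono n₁)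
    (hfact₁ : e₁ ≫ n₁ = iU ≫ fU)
    {P₁ : C} (pI₁ : P₁ ⟶ WU) (pA₁ : P₁ ⟶ U) (hP₁ : IsPullback pI₁ pA₁ n₁ fU)
    -- `K ∨_U (L∩U)` as a subobject of `U`
    {WU' : C} (e₁' : LU ⟶ WU') (n₁' : WU' ⟶ QU) (he₁' : Nonempty (RegularEpi e₁'))
    (hn₁' : Mono n₁') (hfact₁' : e₁' ≫ n₁' = luW ≫ iU ≫ fU)
    {P₁' : C} (pI₁' : P₁' ⟶ WU') (pA₁' : P₁' ⟶ U) (hP₁' : IsPullback pI₁' pA₁' n₁' fU)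
    -- the induced inclusion `K ∨_U (L∩U) ⟶ K ∨_U (U∩V)` and the quotient
    (r₁ : P₁' ⟶ P₁) (hr₁c : r₁ ≫ pA₁ = pA₁')
    {Q₁ : C} (q₁ : P₁ ⟶ Q₁) (hq₁ : IsPCokernel r₁ q₁)
    -- V-side: cokernel `gV` of `l`, join `P₂ = L ∨_V (U∩V)`
    {QV : C} (gV : V ⟶ QV) (hgV : IsPCokernel l gV)
    {WV : C} (e₂ : W ⟶ WV) (n₂ : WV ⟶ QV) (he₂ : Nonempty (RegularEpi e₂)) (hn₂ : Mono n₂)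
    (hfact₂ : e₂ ≫ n₂ = iV ≫ gV)
    {P₂ : C} (pI₂ : P₂ ⟶ WV) (pA₂ : P₂ ⟶ V) (hP₂ : IsPullback pI₂ pA₂ n₂ gV)
    -- `L ∨_V (K∩V)` as a subobject of `V`
    {WV' : C} (e₂' : KV ⟶ WV') (n₂' : WV' ⟶ QV) (he₂' : Nonempty (RegularEpi e₂'))
    (hn₂' : Mono n₂') (hfact₂' : e₂' ≫ n₂' = kvW ≫ iV ≫ gV)
    {P₂' : C} (pI₂' : P₂' ⟶ WV') (pA₂' : P₂' ⟶ V) (hP₂' : IsPullback pI₂' pA₂' n₂' gV)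
    (r₂ : P₂' ⟶ P₂) (hr₂c : r₂ ≫ pA₂ = pA₂')
    {Q₂ : C} (q₂ : P₂ ⟶ Q₂) (hq₂ : IsPCokernel r₂ q₂) :
    Nonempty (Q₁ ≅ QM) ∧ Nonempty (QM ≅ Q₂) := by
  have hkf := hk.isPKernel hfU
  have hlg := hl.isPKernel hgV
  have hφ₁ := isPCokernel_incl_comp hnc hid hkf hfU (hkf.pullback hKV)
    ⟨_, _, hlg.pullback hLU⟩ hf₁ (hg₁.pushout hpush) hmM
    ⟨_, e₁, n₁, he₁, hn₁, hfact₁, _, pI₁, pA₁, hP₁⟩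
    ⟨_, e₁', n₁', he₁', hn₁', hfact₁'.trans (Category.assoc _ _ _).symm, _, pI₁', pA₁', hP₁'⟩
    hr₁c hq₁
  have hφ₂ := isPCokernel_incl_comp hnc hid hlg hgV (hlg.pullback hLU)
    ⟨_, _, hkf.pullback hKV⟩ hg₁ (hf₁.pushout hpush.flip) (hpush.w ▸ hmM)
    ⟨_, e₂, n₂, he₂, hn₂, hfact₂, _, pI₂, pA₂, hP₂⟩
    ⟨_, e₂', n₂', he₂', hn₂', hfact₂'.trans (Category.assoc _ _ _).symm, _, pI₂', pA₂', hP₂'⟩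
    hr₂c hq₂
  exact ⟨hφ₁.nonempty_iso hqMid, hqMid.nonempty_iso hφ₂⟩

open CategoryTheory CategoryTheory.Limits StarReg PtReg in
/-- The Zassenhaus Lemma in an ideal determined category. -/
theorem statement14 {C : Type u} [Category.{v} C] [HasZeroMorphisms C] [HasZeroObject C]
    [HasBinaryCoproducts C] (hfl : HasFiniteLimits C) (hnc : NormalCat C)
    -- ideal determined: regular images of normal monos are normal monos
    (hid : ∀ ⦃K X Y Z : C⦄ (k : K ⟶ X) (f : X ⟶ Y) (e : K ⟶ Z) (n : Z ⟶ Y),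
      IsNormalMonoP k → Nonempty (RegularEpi f) → Nonempty (RegularEpi e) → Mono n →
      e ≫ n = k ≫ f → IsNormalMonoP n)
    -- kernels `k : K ⟶ U`, `l : L ⟶ V` and monos `u : U ⟶ A`, `v : V ⟶ A`
    {K U L V A : C} (k : K ⟶ U) (hk : IsNormalMonoP k) (l : L ⟶ V) (hl : IsNormalMonoP l)
    (u : U ⟶ A) (hu : Mono u) (v : V ⟶ A) (hv : Mono v)
    -- the intersection `W = U ∩ V`
    {W : C} (iU : W ⟶ U) (iV : W ⟶ V) (hW : IsPullback iU iV u v)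
    -- `K ∩ V` as a subobject of `W`, and `L ∩ U` as a subobject of `W`
    {KV : C} (kvK : KV ⟶ K) (kvW : KV ⟶ W) (hKV : IsPullback kvK kvW k iU)
    {LU : C} (luL : LU ⟶ L) (luW : LU ⟶ W) (hLU : IsPullback luL luW l iV)
    -- cokernels of `K∩V → W` and `L∩U → W`, their pushout and its diagonal
    {W₁ : C} (f₁ : W ⟶ W₁) (hf₁ : IsPCokernel kvW f₁)
    {W₂ : C} (g₁ : W ⟶ W₂) (hg₁ : IsPCokernel luW g₁)
    {Tq : C} (p₁ : W₁ ⟶ Tq) (p₂ : W₂ ⟶ Tq) (hpush : IsPushout f₁ g₁ p₁ p₂)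
    -- the supremum `(K∩V) ∨ (L∩U)`: kernel of the diagonal
    {MM : C} (mM : MM ⟶ W) (hmM : IsPKernel mM (f₁ ≫ p₁))
    -- the middle quotient `(U∩V)/((K∩V) ∨ (L∩U))`
    {QM : C} (qMid : W ⟶ QM) (hqMid : IsPCokernel mM qMid)
    -- U-side: cokernel `fU` of `k`, join `P₁ = K ∨_U (U∩V)`
    {QU : C} (fU : U ⟶ QU) (hfU : IsPCokernel k fU)
    {WU : C} (e₁ : W ⟶ WU) (n₁ : WU ⟶ QU) (he₁ : Nonempty (RegularEpi e₁)) (hn₁ : Mono n₁)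
    (hfact₁ : e₁ ≫ n₁ = iU ≫ fU)
    {P₁ : C} (pI₁ : P₁ ⟶ WU) (pA₁ : P₁ ⟶ U) (hP₁ : IsPullback pI₁ pA₁ n₁ fU)
    -- `K ∨_U (L∩U)` as a subobject of `U`
    {WU' : C} (e₁' : LU ⟶ WU') (n₁' : WU' ⟶ QU) (he₁' : Nonempty (RegularEpi e₁'))
    (hn₁' : Mono n₁') (hfact₁' : e₁' ≫ n₁' = luW ≫ iU ≫ fU)
    {P₁' : C} (pI₁' : P₁' ⟶ WU') (pA₁' : P₁' ⟶ U) (hP₁' : IsPullback pI₁' pA₁' n₁' fU)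
    -- the induced inclusion `K ∨_U (L∩U) ⟶ K ∨_U (U∩V)` and the quotient
    (r₁ : P₁' ⟶ P₁) (hr₁ : Mono r₁) (hr₁c : r₁ ≫ pA₁ = pA₁')
    {Q₁ : C} (q₁ : P₁ ⟶ Q₁) (hq₁ : IsPCokernel r₁ q₁)
    -- V-side: cokernel `gV` of `l`, join `P₂ = L ∨_V (U∩V)`
    {QV : C} (gV : V ⟶ QV) (hgV : IsPCokernel l gV)
    {WV : C} (e₂ : W ⟶ WV) (n₂ : WV ⟶ QV) (he₂ : Nonempty (RegularEpi e₂)) (hn₂ : Mono n₂)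
    (hfact₂ : e₂ ≫ n₂ = iV ≫ gV)
    {P₂ : C} (pI₂ : P₂ ⟶ WV) (pA₂ : P₂ ⟶ V) (hP₂ : IsPullback pI₂ pA₂ n₂ gV)
    -- `L ∨_V (K∩V)` as a subobject of `V`
    {WV' : C} (e₂' : KV ⟶ WV') (n₂' : WV' ⟶ QV) (he₂' : Nonempty (RegularEpi e₂'))
    (hn₂' : Mono n₂') (hfact₂' : e₂' ≫ n₂' = kvW ≫ iV ≫ gV)
    {P₂' : C} (pI₂' : P₂' ⟶ WV') (pA₂' : P₂' ⟶ V) (hP₂' : IsPullback pI₂' pA₂' n₂' gV)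
    (r₂ : P₂' ⟶ P₂) (hr₂ : Mono r₂) (hr₂c : r₂ ≫ pA₂ = pA₂')
    {Q₂ : C} (q₂ : P₂ ⟶ Q₂) (hq₂ : IsPCokernel r₂ q₂) :
    Nonempty (Q₁ ≅ QM) ∧ Nonempty (QM ≅ Q₂) :=
  statement14_general hnc hid k hk l hl u v iU iV kvK kvW hKV luL luW hLU f₁ hf₁ g₁ hg₁ p₁ p₂ hpush
    mM hmM qMid hqMid fU hfU e₁ n₁ he₁ hn₁ hfact₁ pI₁ pA₁ hP₁ e₁' n₁' he₁' hn₁' hfact₁' pI₁' pA₁'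
    hP₁' r₁ hr₁c q₁ hq₁ gV hgV e₂ n₂ he₂ hn₂ hfact₂ pI₂ pA₂ hP₂ e₂' n₂' he₂' hn₂' hfact₂' pI₂' pA₂'
    hP₂' r₂ hr₂c q₂ hq₂
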